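/- Suppose s ≥ 3 and r > ρ(s), i.e. r ≥ s+1 and L(r,s) > 0. Then the functions τ ↦ α_τ + β_τ + δ_τ and τ ↦ δ_τ·((s−3)α_τ + β_τ + δ_τ)/α_τ² are both strictly increasing with respect to τ on the interval (1, ∞). -/
import Mathlib


noncomputable section

/-- `g(x) = x·ln x` (note `g(0) = 0` automatically, since `Real.log 0 = 0`). -/
def xlog (x : ℝ) : ℝ := x * Real.log x

/-- `h(r,s) = (r−2)² + 2(s−2)(r−1)(r−2) + (1/2)(s−2)(s−3)(r−1)²`. -/
def hRS (r s : ℝ) : ℝ :=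
  (r - 2) ^ 2 + 2 * (s - 2) * (r - 1) * (r - 2) + (1 / 2) * (s - 2) * (s - 3) * (r - 1) ^ 2

/-- `κ₁ = (r−1)^{s−2}(r−2)²(s−1)(s−2)^{2(s−2)}` (real exponents, via `rpow`). -/
def kap1 (r s : ℝ) : ℝ := (r - 1) ^ (s - 2) * (r - 2) ^ 2 * (s - 1) * (s - 2) ^ (2 * (s - 2))

/-- `κ₂ = 2h(r,s)/(r−2)²`. -/
def kap2 (r s : ℝ) : ℝ := 2 * hRS r s / (r - 2) ^ 2

/-- `κ₃ = (rs−r−s)²/h(r,s)`. -/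
def kap3 (r s : ℝ) : ℝ := (r * s - r - s) ^ 2 / hRS r s

/-- `κ₄ = (r−3)/(r−2)`. -/
def kap4 (r : ℝ) : ℝ := (r - 3) / (r - 2)

/-- The function `φ` of four real variables `(α,β,γ,δ)` (with parameters `r,s`). -/
def phiRS (r s α β γ δ : ℝ) : ℝ :=
  xlog (1 - α - β) + 2 * (s - 1) * xlog α + ((s - 1) / s) * xlog (r * s - r - s - s * α)
    - xlog (β - γ) - xlog δ - 2 * xlog γ - 2 * xlog (α - β - δ)
    - xlog ((s - 3) * α + β + δ) - xlog (1 - α - β - γ)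
    + α * Real.log (kap1 r s) + β * Real.log (kap2 r s) + γ * Real.log (kap3 r s)
    + δ * Real.log (kap4 r)

/-- Membership in the domain `K = {(α,β,γ,δ) : 0 ≤ γ ≤ β, 0 ≤ δ ≤ α−β, α+β+γ ≤ 1}`. -/
def memK (α β γ δ : ℝ) : Prop :=
  0 ≤ γ ∧ γ ≤ β ∧ 0 ≤ δ ∧ δ ≤ α - β ∧ α + β + γ ≤ 1

/-- `L(r,s) = ln(r−1) + ln(s−1) + ((s−1)(rs−r−s)/s)·ln(1 − s/(rs−r))`;
the hypothesis `r > ρ(s)` means `r ≥ s+1` and `L(r,s) > 0`. -/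
def Lfun (r s : ℝ) : ℝ :=
  Real.log (r - 1) + Real.log (s - 1) +
    ((s - 1) * (r * s - r - s) / s) * Real.log (1 - s / (r * s - r))

end

noncomputable section

/-- `D_τ = (τ−1)² + 2κ₃τ − κ₃`. -/
def DT (r s τ : ℝ) : ℝ := (τ - 1) ^ 2 + 2 * kap3 r s * τ - kap3 r s

/-- `p_τ = ((τ−1)² + κ₃(τ−1))/D_τ`. -/
def pT (r s τ : ℝ) : ℝ := ((τ - 1) ^ 2 + kap3 r s * (τ - 1)) / DT r s τ

/-- `q_τ = κ₄·τ·(τ−1)²/(κ₂·D_τ)`. -/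
def qT (r s τ : ℝ) : ℝ := kap4 r * τ * (τ - 1) ^ 2 / (kap2 r s * DT r s τ)

/-- `N_τ = p_τ + q_τ + ((s−3)/(2κ₄))q_τ + √((s−2)/κ₄·q_τ(p_τ+q_τ) + (s−3)²/(4κ₄²)·q_τ²)`. -/
def NT (r s τ : ℝ) : ℝ :=
  pT r s τ + qT r s τ + ((s - 3) / (2 * kap4 r)) * qT r s τ +
    Real.sqrt (((s - 2) / kap4 r) * qT r s τ * (pT r s τ + qT r s τ) +
      ((s - 3) ^ 2 / (4 * (kap4 r) ^ 2)) * (qT r s τ) ^ 2)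

/-- `α_τ = N_τ/(1+N_τ)`. -/
def alphaT (r s τ : ℝ) : ℝ := NT r s τ / (1 + NT r s τ)

/-- `β_τ = p_τ(1−α_τ)`. -/
def betaT (r s τ : ℝ) : ℝ := pT r s τ * (1 - alphaT r s τ)

/-- `γ_τ = (κ₃(τ−1)/D_τ)(1−α_τ)`. -/
def gammaT (r s τ : ℝ) : ℝ := (kap3 r s * (τ - 1) / DT r s τ) * (1 - alphaT r s τ)

/-- `δ_τ = q_τ(1−α_τ)`. -/
def deltaT (r s τ : ℝ) : ℝ := qT r s τ * (1 - alphaT r s τ)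

end

noncomputable def Ngen (a c p q : ℝ) : ℝ :=
  p + q + c * q + Real.sqrt (a * q * (p + q) + c ^ 2 * q ^ 2)

lemma Xgen_pos {a c p q : ℝ} (ha : 0 < a) (hc : 0 ≤ c) (hp : 0 < p) (hq : 0 < q) :
    0 < a * q * (p + q) + c ^ 2 * q ^ 2 := by nlinarith [mul_pos (mul_pos ha hq) (by linarith : (0:ℝ) < p + q), sq_nonneg (c*q)]

lemma Ngen_gt {a c p q : ℝ} (ha : 0 < a) (hc : 0 ≤ c) (hp : 0 < p) (hq : 0 < q) :
    p + q < Ngen a c p q := by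
  have h1 : 0 < Real.sqrt (a * q * (p + q) + c ^ 2 * q ^ 2) :=
    Real.sqrt_pos.2 (Xgen_pos ha hc hp hq)
  have h2 : 0 ≤ c * q := mul_nonneg hc hq.le
  unfold Ngen; linarith

lemma Ngen_pos {a c p q : ℝ} (ha : 0 < a) (hc : 0 ≤ c) (hp : 0 < p) (hq : 0 < q) :
    0 < Ngen a c p q := lt_trans (by linarith) (Ngen_gt ha hc hp hq)

lemma F1_pstep {a c q p₁ p₂ : ℝ} (ha : 0 < a) (hc : 0 ≤ c) (hq : 0 < q)
    (hp1 : 0 < p₁) (hp1' : p₁ < 1) (hpp : p₁ < p₂) :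
    (Ngen a c p₁ q + (p₁ + q)) / (Ngen a c p₁ q + 1)
      < (Ngen a c p₂ q + (p₂ + q)) / (Ngen a c p₂ q + 1) := by
  have hp2 : 0 < p₂ := hp1.trans hpp
  set X₁ := a * q * (p₁ + q) + c ^ 2 * q ^ 2 with hX1def
  set X₂ := a * q * (p₂ + q) + c ^ 2 * q ^ 2 with hX2def
  have hX1 : 0 < X₁ := Xgen_pos ha hc hp1 hq
  have hX2 : 0 < X₂ := Xgen_pos ha hc hp2 hq
  set A := Real.sqrt X₁ with hAdef
  set B := Real.sqrt X₂ with hBdef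
  have hA : 0 < A := Real.sqrt_pos.2 hX1
  have hB : 0 < B := Real.sqrt_pos.2 hX2
  have hA2 : A ^ 2 = X₁ := Real.sq_sqrt hX1.le
  have hB2 : B ^ 2 = X₂ := Real.sq_sqrt hX2.le
  have hN1 : Ngen a c p₁ q = p₁ + q + c * q + A := rfl
  have hN2 : Ngen a c p₂ q = p₂ + q + c * q + B := rfl
  rw [hN1, hN2]
  have hcq : 0 ≤ c * q := mul_nonneg hc hq.le
  rw [div_lt_div_iff₀ (by linarith) (by linarith)]
  -- cross := RHSnum * LHSden - LHSnum * RHSden > 0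
  have hBA : (B - A) * (A + B) = a * q * (p₂ - p₁) := by
    linear_combination hB2 - hA2
  -- key positivity after multiplying by (A+B)
  have hkey : 0 < ((c*q + A + 2) * (A + B) + a * q * (1 - p₁ - q)) := by
    nlinarith [hA2, mul_nonneg hcq (by linarith : (0:ℝ) ≤ A + B), mul_pos hA hB,
      mul_pos ha hq, mul_pos (mul_pos ha hq) hp1, sq_nonneg (c*q)]
  have hcross' : (((p₂ + q + c * q + B) + (p₂ + q)) * ((p₁ + q + c * q + A) + 1)
      - ((p₁ + q + c * q + A) + (p₁ + q)) * ((p₂ + q + c * q + B) + 1)) * (A + B)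
      = (p₂ - p₁) * ((c*q + A + 2) * (A + B) + a * q * (1 - p₁ - q)) := by
    linear_combination (1 - p₁ - q) * hBA
  have h := mul_pos (sub_pos.2 hpp) hkey
  rw [← hcross'] at h
  rcases mul_pos_iff.1 h with ⟨h1, _⟩ | ⟨_, h2⟩
  · linarith
  · linarith

lemma F1_qstep {a c p q₁ q₂ : ℝ} (ha : 0 < a) (hc : 0 ≤ c) (hp : 0 < p) (hp' : p < 1)
    (hq1 : 0 < q₁) (hqq : q₁ < q₂) :
    (Ngen a c p q₁ + (p + q₁)) / (Ngen a c p q₁ + 1)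
      < (Ngen a c p q₂ + (p + q₂)) / (Ngen a c p q₂ + 1) := by
  have hq2 : 0 < q₂ := hq1.trans hqq
  set X₁ := a * q₁ * (p + q₁) + c ^ 2 * q₁ ^ 2 with hX1def
  set X₂ := a * q₂ * (p + q₂) + c ^ 2 * q₂ ^ 2 with hX2def
  have hX1 : 0 < X₁ := Xgen_pos ha hc hp hq1
  have hX2 : 0 < X₂ := Xgen_pos ha hc hp hq2
  set A := Real.sqrt X₁ with hAdef
  set B := Real.sqrt X₂ with hBdef
  have hA : 0 < A := Real.sqrt_pos.2 hX1
  have hB : 0 < B := Real.sqrt_pos.2 hX2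
  have hA2 : A ^ 2 = X₁ := Real.sq_sqrt hX1.le
  have hB2 : B ^ 2 = X₂ := Real.sq_sqrt hX2.le
  have hN1 : Ngen a c p q₁ = p + q₁ + c * q₁ + A := rfl
  have hN2 : Ngen a c p q₂ = p + q₂ + c * q₂ + B := rfl
  rw [hN1, hN2]
  have hcq1 : 0 ≤ c * q₁ := mul_nonneg hc hq1.le
  have hcq2 : 0 ≤ c * q₂ := mul_nonneg hc hq2.le
  rw [div_lt_div_iff₀ (by linarith) (by linarith)]
  -- Cauchy-Schwarz type bound : A*B ≥ a*q₁*(p+q₂) + c^2*q₁*q₂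
  have hy : 0 ≤ a * q₁ * (p + q₂) + c ^ 2 * (q₁ * q₂) := by
    have := mul_pos (mul_pos ha hq1) (by linarith : (0:ℝ) < p + q₂)
    nlinarith [mul_pos hq1 hq2, sq_nonneg c]
  have hABge : a * q₁ * (p + q₂) + c ^ 2 * (q₁ * q₂) ≤ A * B := by
    have hAB : A * B = Real.sqrt (X₁ * X₂) := (Real.sqrt_mul hX1.le X₂).symm
    rw [hAB]
    refine (Real.le_sqrt hy (mul_pos hX1 hX2).le).2 ?_
    have hfac : X₁ * X₂ - (a * q₁ * (p + q₂) + c ^ 2 * (q₁ * q₂)) ^ 2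
        = a * p * q₁ * (q₂ - q₁) * (a * (p + q₂) + c ^ 2 * q₂) := by
      rw [hX1def, hX2def]; ring
    nlinarith [mul_pos (mul_pos (mul_pos ha hp) hq1) (sub_pos.2 hqq), mul_pos ha hq2,
      sq_nonneg c, mul_pos (mul_pos ha hq2) hq2, sq_nonneg (c*c*q₂)]
  -- M := coefficient
  set M := c * (A + B) + a * (p + q₂ + q₁) + c ^ 2 * (q₁ + q₂) with hMdef
  have hM : 0 < M := by
    have h1 : 0 < a * (p + q₂ + q₁) := mul_pos ha (by linarith)
    have h2 : 0 ≤ c ^ 2 * (q₁ + q₂) := by positivity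
    have h3 : 0 ≤ c * (A + B) := mul_nonneg hc (by linarith)
    rw [hMdef]; linarith
  have hBA : (B - A) * (A + B) = (q₂ - q₁) * (a * (p + q₂ + q₁) + c ^ 2 * (q₁ + q₂)) := by
    linear_combination hB2 - hA2
  -- key positivity: (c q₁ + A + 2)(A+B) + (1 - p - q₁) M > 0
  have hkey : 0 < (c * q₁ + A + 2) * (A + B) + (1 - p - q₁) * M := by
    have hexp : (c * q₁ + A + 2) * (A + B) + (1 - p - q₁) * M
        = 2 * (A + B) + (1 - p) * M + a * q₁ * p
          + (A * B - (a * q₁ * (p + q₂) + c ^ 2 * (q₁ * q₂)))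
          + (A ^ 2 - (a * q₁ * (p + q₁) + c ^ 2 * q₁ ^ 2)) := by
      rw [hMdef]; ring
    rw [hexp, hA2, hX1def]
    have h1 : 0 ≤ (1 - p) * M := mul_nonneg (by linarith) hM.le
    have h2 : 0 < a * q₁ * p := mul_pos (mul_pos ha hq1) hp
    linarith
  have hcross' : (((p + q₂ + c * q₂ + B) + (p + q₂)) * ((p + q₁ + c * q₁ + A) + 1)
      - ((p + q₁ + c * q₁ + A) + (p + q₁)) * ((p + q₂ + c * q₂ + B) + 1)) * (A + B)
      = (q₂ - q₁) * ((c * q₁ + A + 2) * (A + B) + (1 - p - q₁) * M) := by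
    rw [hMdef]
    linear_combination (1 - p - q₁) * hBA
  have h := mul_pos (sub_pos.2 hqq) hkey
  rw [← hcross'] at h
  rcases mul_pos_iff.1 h with ⟨h1, _⟩ | ⟨_, h2⟩
  · linarith
  · linarith

/-- `N/P` strictly increases when `q/P` increases (i.e. `p₂ q₁ < p₁ q₂`). -/
lemma ratio_step {a c p₁ q₁ p₂ q₂ : ℝ} (ha : 0 < a) (hc : 0 ≤ c)
    (hp1 : 0 < p₁) (hq1 : 0 < q₁) (hp2 : 0 < p₂) (hq2 : 0 < q₂)
    (hx : p₂ * q₁ < p₁ * q₂) :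
    (p₂ + q₂) * Ngen a c p₁ q₁ < (p₁ + q₁) * Ngen a c p₂ q₂ := by
  set X₁ := a * q₁ * (p₁ + q₁) + c ^ 2 * q₁ ^ 2 with hX1def
  set X₂ := a * q₂ * (p₂ + q₂) + c ^ 2 * q₂ ^ 2 with hX2def
  have hX1 : 0 < X₁ := Xgen_pos ha hc hp1 hq1
  have hX2 : 0 < X₂ := Xgen_pos ha hc hp2 hq2
  set A := Real.sqrt X₁ with hAdef
  set B := Real.sqrt X₂ with hBdef
  have hA : 0 < A := Real.sqrt_pos.2 hX1
  have hB : 0 < B := Real.sqrt_pos.2 hX2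
  have hA2 : A ^ 2 = X₁ := Real.sq_sqrt hX1.le
  have hB2 : B ^ 2 = X₂ := Real.sq_sqrt hX2.le
  have hN1 : Ngen a c p₁ q₁ = p₁ + q₁ + c * q₁ + A := rfl
  have hN2 : Ngen a c p₂ q₂ = p₂ + q₂ + c * q₂ + B := rfl
  rw [hN1, hN2]
  have hP1 : 0 < p₁ + q₁ := by linarith
  have hP2 : 0 < p₂ + q₂ := by linarith
  -- (P₁ B)² - (P₂ A)² > 0
  have hsq : ((p₁ + q₁) * B) ^ 2 - ((p₂ + q₂) * A) ^ 2
      = a * (p₁ + q₁) * (p₂ + q₂) * (p₁ * q₂ - p₂ * q₁)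
        + c ^ 2 * ((p₁ + q₁) * q₂ - (p₂ + q₂) * q₁) * ((p₁ + q₁) * q₂ + (p₂ + q₂) * q₁) := by
    linear_combination (p₁ + q₁) ^ 2 * hB2 - (p₂ + q₂) ^ 2 * hA2
  have hdpos : 0 < ((p₁ + q₁) * B) ^ 2 - ((p₂ + q₂) * A) ^ 2 := by
    rw [hsq]
    have h1 : 0 < a * (p₁ + q₁) * (p₂ + q₂) * (p₁ * q₂ - p₂ * q₁) := by
      apply mul_pos (mul_pos (mul_pos ha hP1) hP2); linarith
    have h2 : (p₁ + q₁) * q₂ - (p₂ + q₂) * q₁ = p₁ * q₂ - p₂ * q₁ := by ring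
    have h3 : 0 ≤ c ^ 2 * ((p₁ + q₁) * q₂ - (p₂ + q₂) * q₁) * ((p₁ + q₁) * q₂ + (p₂ + q₂) * q₁) := by
      apply mul_nonneg (mul_nonneg (sq_nonneg c) (by rw [h2]; linarith))
      have := mul_pos hP1 hq2
      have := mul_pos hP2 hq1
      linarith
    linarith
  have hPB : (p₂ + q₂) * A < (p₁ + q₁) * B := by
    nlinarith [mul_pos hP2 hA, mul_pos hP1 hB]
  have hcq : 0 ≤ c * ((p₁ + q₁) * q₂ - (p₂ + q₂) * q₁) := by
    apply mul_nonneg hc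
    have : (p₁ + q₁) * q₂ - (p₂ + q₂) * q₁ = p₁ * q₂ - p₂ * q₁ := by ring
    rw [this]; linarith
  nlinarith [hPB, hcq]

lemma Ngen_sq {a c p q k4 s : ℝ} (hX : 0 ≤ a * q * (p + q) + c ^ 2 * q ^ 2)
    (hka : k4 * a = s - 2) (hkc : 2 * k4 * c = s - 3) :
    q * ((s - 3) * Ngen a c p q + (p + q)) = k4 * (Ngen a c p q - (p + q)) ^ 2 := by
  have hA2 : Real.sqrt (a * q * (p + q) + c ^ 2 * q ^ 2) ^ 2
      = a * q * (p + q) + c ^ 2 * q ^ 2 := Real.sq_sqrt hX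
  unfold Ngen
  linear_combination (-k4) * hA2 + (-(q * (p + q))) * hka
    + (-(c * q ^ 2 + q * Real.sqrt (a * q * (p + q) + c ^ 2 * q ^ 2))) * hkc

lemma val1_aux (N p q : ℝ) (hN : 0 < N) :
    N / (1 + N) + p * (1 - N / (1 + N)) + q * (1 - N / (1 + N)) = (N + (p + q)) / (N + 1) := by
  have h1 : (0:ℝ) < 1 + N := by linarith
  field_simp
  ring

lemma val2_aux (N p q s k4 : ℝ) (hN : 0 < N)
    (hsq : q * ((s - 3) * N + (p + q)) = k4 * (N - (p + q)) ^ 2) :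
    q * (1 - N / (1 + N)) * ((s - 3) * (N / (1 + N)) + p * (1 - N / (1 + N))
        + q * (1 - N / (1 + N))) / (N / (1 + N)) ^ 2
      = k4 * ((N - (p + q)) / N) ^ 2 := by
  have h1 : (0:ℝ) < 1 + N := by linarith
  have key : q * (1 - N / (1 + N)) * ((s - 3) * (N / (1 + N)) + p * (1 - N / (1 + N))
        + q * (1 - N / (1 + N))) / (N / (1 + N)) ^ 2
      = q * ((s - 3) * N + (p + q)) / N ^ 2 := by
    rw [div_eq_div_iff (by positivity) (by positivity)]
    field_simp
    ring
  rw [key, hsq, div_pow, mul_div_assoc]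

set_option maxHeartbeats 1600000 in
/-- If `s ≥ 3` and `r > ρ(s)` (i.e. `r ≥ s+1` and `L(r,s) > 0`), then the functions
`τ ↦ α_τ + β_τ + δ_τ` and `τ ↦ δ_τ((s−3)α_τ + β_τ + δ_τ)/α_τ²` are both strictly
increasing on the interval `(1,∞)`. -/
theorem stmt_15 (r s : ℤ) (hs : 3 ≤ s) (hr : s + 1 ≤ r) (hL : 0 < Lfun (r : ℝ) (s : ℝ)) :
    StrictMonoOn (fun τ : ℝ => alphaT r s τ + betaT r s τ + deltaT r s τ) (Set.Ioi 1) ∧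
    StrictMonoOn
      (fun τ : ℝ =>
        deltaT r s τ * (((s : ℝ) - 3) * alphaT r s τ + betaT r s τ + deltaT r s τ) /
          (alphaT r s τ) ^ 2)
      (Set.Ioi 1) := by
  have hs' : (3:ℝ) ≤ (s:ℝ) := by exact_mod_cast hs
  have hr' : (s:ℝ) + 1 ≤ (r:ℝ) := by exact_mod_cast hr
  have hr4 : (4:ℝ) ≤ (r:ℝ) := by linarith
  have hr2 : (0:ℝ) < (r:ℝ) - 2 := by linarith
  have hr3 : (0:ℝ) < (r:ℝ) - 3 := by linarith
  have hh : 0 < hRS (r:ℝ) (s:ℝ) := by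
    unfold hRS
    nlinarith [sq_nonneg ((r:ℝ) - 2), mul_pos hr2 hr2,
      mul_nonneg (mul_nonneg (by linarith : (0:ℝ) ≤ (s:ℝ) - 2) (by linarith : (0:ℝ) ≤ (r:ℝ) - 1)) hr2.le,
      mul_nonneg (mul_nonneg (by linarith : (0:ℝ) ≤ (s:ℝ) - 2) (by linarith : (0:ℝ) ≤ (s:ℝ) - 3)) (sq_nonneg ((r:ℝ) - 1))]
  have hk2 : 0 < kap2 (r:ℝ) (s:ℝ) := by
    unfold kap2; exact div_pos (by linarith) (pow_pos hr2 2)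
  have hrs0 : 0 < (r:ℝ) * s - r - s := by nlinarith
  have hk3 : 0 < kap3 (r:ℝ) (s:ℝ) := by
    unfold kap3; exact div_pos (pow_pos hrs0 2) hh
  have hk4 : 0 < kap4 (r:ℝ) := div_pos hr3 hr2
  set k := kap3 (r:ℝ) (s:ℝ) with hkdef
  set a := ((s:ℝ) - 2) / kap4 (r:ℝ) with hadef
  set c := ((s:ℝ) - 3) / (2 * kap4 (r:ℝ)) with hcdef
  have ha : 0 < a := div_pos (by linarith) hk4
  have hc : 0 ≤ c := div_nonneg (by linarith) (by linarith)
  have hka : kap4 (r:ℝ) * a = (s:ℝ) - 2 := by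
    rw [hadef]; field_simp
  have hkc : 2 * kap4 (r:ℝ) * c = (s:ℝ) - 3 := by
    rw [hcdef]; field_simp
  have hc2 : ((s:ℝ) - 3) ^ 2 / (4 * (kap4 (r:ℝ)) ^ 2) = c ^ 2 := by
    rw [hcdef, div_pow]; ring_nf
  have hNT : ∀ τ : ℝ, NT (r:ℝ) (s:ℝ) τ = Ngen a c (pT r s τ) (qT r s τ) := by
    intro τ
    unfold NT Ngen
    rw [← hadef, ← hcdef, hc2]
  -- basic pointwise facts
  have hbasic : ∀ τ : ℝ, 1 < τ →
      0 < pT (r:ℝ) (s:ℝ) τ ∧ pT (r:ℝ) (s:ℝ) τ < 1 ∧ 0 < qT (r:ℝ) (s:ℝ) τ := by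
    intro τ hτ
    have ht : 0 < τ - 1 := by linarith
    have hD : 0 < DT (r:ℝ) (s:ℝ) τ := by
      unfold DT; rw [← hkdef]
      nlinarith [mul_pos hk3 ht, sq_nonneg (τ - 1)]
    refine ⟨?_, ?_, ?_⟩
    · unfold pT; rw [← hkdef]
      apply div_pos ?_ (by unfold DT; rw [← hkdef]; nlinarith [mul_pos hk3 ht, sq_nonneg (τ - 1)])
      nlinarith [mul_pos hk3 ht, sq_nonneg (τ - 1), pow_pos ht 2]
    · unfold pT; rw [← hkdef]
      rw [div_lt_one (by unfold DT; rw [← hkdef]; nlinarith [mul_pos hk3 ht, sq_nonneg (τ - 1)])]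
      unfold DT; rw [← hkdef]
      nlinarith [mul_pos hk3 ht]
    · unfold qT
      apply div_pos
      · exact mul_pos (mul_pos hk4 (by linarith)) (pow_pos ht 2)
      · apply mul_pos hk2
        unfold DT; rw [← hkdef]
        nlinarith [mul_pos hk3 ht, sq_nonneg (τ - 1)]
  have hDpos : ∀ τ : ℝ, 1 < τ → 0 < DT (r:ℝ) (s:ℝ) τ := by
    intro τ hτ
    have ht : 0 < τ - 1 := by linarith
    unfold DT; rw [← hkdef]
    nlinarith [mul_pos hk3 ht, sq_nonneg (τ - 1)]
  -- strict monotonicity of p, q, and the ratio condition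
  have hpmono : ∀ τ₁ τ₂ : ℝ, 1 < τ₁ → τ₁ < τ₂ → pT (r:ℝ) (s:ℝ) τ₁ < pT (r:ℝ) (s:ℝ) τ₂ := by
    intro τ₁ τ₂ h₁ h₁₂
    have h₂ : 1 < τ₂ := h₁.trans h₁₂
    have ht1 : 0 < τ₁ - 1 := by linarith
    have ht2 : 0 < τ₂ - 1 := by linarith
    unfold pT; rw [← hkdef, div_lt_div_iff₀ (hDpos τ₁ h₁) (hDpos τ₂ h₂)]
    have hid : ((τ₂ - 1) ^ 2 + k * (τ₂ - 1)) * DT (r:ℝ) (s:ℝ) τ₁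
        - ((τ₁ - 1) ^ 2 + k * (τ₁ - 1)) * DT (r:ℝ) (s:ℝ) τ₂
        = k * (τ₂ - τ₁) * ((τ₁ - 1) * (τ₂ - 1) + (τ₁ - 1) + (τ₂ - 1) + k) := by
      unfold DT; rw [← hkdef]; ring
    nlinarith [hid, mul_pos (mul_pos hk3 (by linarith : (0:ℝ) < τ₂ - τ₁))
      (by nlinarith [mul_pos ht1 ht2] : (0:ℝ) < (τ₁ - 1) * (τ₂ - 1) + (τ₁ - 1) + (τ₂ - 1) + k)]
  have hqmono : ∀ τ₁ τ₂ : ℝ, 1 < τ₁ → τ₁ < τ₂ → qT (r:ℝ) (s:ℝ) τ₁ < qT (r:ℝ) (s:ℝ) τ₂ := by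
    intro τ₁ τ₂ h₁ h₁₂
    have h₂ : 1 < τ₂ := h₁.trans h₁₂
    have ht1 : 0 < τ₁ - 1 := by linarith
    have ht2 : 0 < τ₂ - 1 := by linarith
    unfold qT
    rw [div_lt_div_iff₀ (mul_pos hk2 (hDpos τ₁ h₁)) (mul_pos hk2 (hDpos τ₂ h₂))]
    have hid : kap4 (r:ℝ) * τ₂ * (τ₂ - 1) ^ 2 * (kap2 (r:ℝ) (s:ℝ) * DT (r:ℝ) (s:ℝ) τ₁)
        - kap4 (r:ℝ) * τ₁ * (τ₁ - 1) ^ 2 * (kap2 (r:ℝ) (s:ℝ) * DT (r:ℝ) (s:ℝ) τ₂)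
        = kap2 (r:ℝ) (s:ℝ) * kap4 (r:ℝ) * (τ₂ - τ₁) *
          ((τ₁-1)^2*(τ₂-1)^2 + 2*k*(τ₁-1)*(τ₂-1)*((τ₁-1)+(τ₂-1))
            + k*((τ₁-1)^2+(τ₁-1)*(τ₂-1)+(τ₂-1)^2) + 2*k*(τ₁-1)*(τ₂-1) + k*((τ₁-1)+(τ₂-1))) := by
      unfold DT; rw [← hkdef]; ring
    have hpoly : (0:ℝ) < (τ₁-1)^2*(τ₂-1)^2 + 2*k*(τ₁-1)*(τ₂-1)*((τ₁-1)+(τ₂-1))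
            + k*((τ₁-1)^2+(τ₁-1)*(τ₂-1)+(τ₂-1)^2) + 2*k*(τ₁-1)*(τ₂-1) + k*((τ₁-1)+(τ₂-1)) := by
      nlinarith [mul_pos ht1 ht2, mul_pos (mul_pos ht1 ht2) (mul_pos ht1 ht2),
        mul_pos hk3 (mul_pos ht1 ht2), sq_nonneg (τ₁-1), sq_nonneg (τ₂-1),
        mul_pos hk3 ht1, mul_pos hk3 ht2,
        mul_pos (mul_pos hk3 (mul_pos ht1 ht2)) (by linarith : (0:ℝ) < (τ₁-1)+(τ₂-1))]
    nlinarith [hid, mul_pos (mul_pos (mul_pos (mul_pos hk2 hk4) (by linarith : (0:ℝ) < τ₂ - τ₁)) hpoly) (by norm_num : (0:ℝ) < 1)]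
  have hxmono : ∀ τ₁ τ₂ : ℝ, 1 < τ₁ → τ₁ < τ₂ →
      pT (r:ℝ) (s:ℝ) τ₂ * qT (r:ℝ) (s:ℝ) τ₁ < pT (r:ℝ) (s:ℝ) τ₁ * qT (r:ℝ) (s:ℝ) τ₂ := by
    intro τ₁ τ₂ h₁ h₁₂
    have h₂ : 1 < τ₂ := h₁.trans h₁₂
    have ht1 : 0 < τ₁ - 1 := by linarith
    have ht2 : 0 < τ₂ - 1 := by linarith
    unfold pT qT
    rw [← hkdef, div_mul_div_comm, div_mul_div_comm,
      div_lt_div_iff₀ (mul_pos (hDpos τ₂ h₂) (mul_pos hk2 (hDpos τ₁ h₁)))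
        (mul_pos (hDpos τ₁ h₁) (mul_pos hk2 (hDpos τ₂ h₂)))]
    have hid : ((τ₁ - 1) ^ 2 + k * (τ₁ - 1)) * (kap4 (r:ℝ) * τ₂ * (τ₂ - 1) ^ 2)
          * (DT (r:ℝ) (s:ℝ) τ₂ * (kap2 (r:ℝ) (s:ℝ) * DT (r:ℝ) (s:ℝ) τ₁))
        - ((τ₂ - 1) ^ 2 + k * (τ₂ - 1)) * (kap4 (r:ℝ) * τ₁ * (τ₁ - 1) ^ 2)
          * (DT (r:ℝ) (s:ℝ) τ₁ * (kap2 (r:ℝ) (s:ℝ) * DT (r:ℝ) (s:ℝ) τ₂))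
        = (DT (r:ℝ) (s:ℝ) τ₁ * DT (r:ℝ) (s:ℝ) τ₂ * kap2 (r:ℝ) (s:ℝ) * kap4 (r:ℝ))
          * ((τ₁ - 1) * (τ₂ - 1) * (τ₂ - τ₁)
            * ((τ₁-1)*(τ₂-1) + k*((τ₁-1)+(τ₂-1)) + k)) := by
      unfold DT; rw [← hkdef]; ring
    have h2 : (0:ℝ) < (τ₁ - 1) * (τ₂ - 1) * (τ₂ - τ₁)
        * ((τ₁-1)*(τ₂-1) + k*((τ₁-1)+(τ₂-1)) + k) := by
      apply mul_pos (mul_pos (mul_pos ht1 ht2) (by linarith))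
      nlinarith [mul_pos ht1 ht2, mul_pos hk3 ht1, mul_pos hk3 ht2]
    nlinarith [hid, mul_pos (mul_pos (mul_pos (mul_pos (hDpos τ₁ h₁) (hDpos τ₂ h₂)) hk2) hk4) h2]
  -- value identities
  have hval1 : ∀ τ : ℝ, 1 < τ →
      alphaT (r:ℝ) (s:ℝ) τ + betaT (r:ℝ) (s:ℝ) τ + deltaT (r:ℝ) (s:ℝ) τ
        = (Ngen a c (pT r s τ) (qT r s τ) + (pT (r:ℝ) (s:ℝ) τ + qT (r:ℝ) (s:ℝ) τ))
          / (Ngen a c (pT r s τ) (qT r s τ) + 1) := by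
    intro τ hτ
    obtain ⟨hp0, hp1, hq0⟩ := hbasic τ hτ
    have hN : 0 < Ngen a c (pT r s τ) (qT r s τ) := Ngen_pos ha hc hp0 hq0
    simp only [alphaT, betaT, deltaT]
    rw [hNT τ]
    exact val1_aux _ _ _ hN
  have hval2 : ∀ τ : ℝ, 1 < τ →
      deltaT (r:ℝ) (s:ℝ) τ * (((s:ℝ) - 3) * alphaT (r:ℝ) (s:ℝ) τ + betaT (r:ℝ) (s:ℝ) τ
          + deltaT (r:ℝ) (s:ℝ) τ) / (alphaT (r:ℝ) (s:ℝ) τ) ^ 2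
        = kap4 (r:ℝ) * ((Ngen a c (pT r s τ) (qT r s τ) - (pT (r:ℝ) (s:ℝ) τ + qT (r:ℝ) (s:ℝ) τ))
            / Ngen a c (pT r s τ) (qT r s τ)) ^ 2 := by
    intro τ hτ
    obtain ⟨hp0, hp1, hq0⟩ := hbasic τ hτ
    have hN : 0 < Ngen a c (pT r s τ) (qT r s τ) := Ngen_pos ha hc hp0 hq0
    have hXnn : (0:ℝ) ≤ a * qT (r:ℝ) (s:ℝ) τ * (pT (r:ℝ) (s:ℝ) τ + qT (r:ℝ) (s:ℝ) τ)
        + c ^ 2 * (qT (r:ℝ) (s:ℝ) τ) ^ 2 := (Xgen_pos ha hc hp0 hq0).le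
    have hsq := Ngen_sq hXnn hka hkc
    simp only [alphaT, betaT, deltaT]
    rw [hNT τ]
    exact val2_aux _ _ _ _ _ hN hsq
  constructor
  · intro τ₁ h₁ τ₂ h₂ h₁₂
    simp only [Set.mem_Ioi] at h₁ h₂
    simp only
    obtain ⟨hp01, hp11, hq01⟩ := hbasic τ₁ h₁
    obtain ⟨hp02, hp12, hq02⟩ := hbasic τ₂ h₂
    rw [hval1 τ₁ h₁, hval1 τ₂ h₂]
    calc (Ngen a c (pT r s τ₁) (qT r s τ₁) + (pT (r:ℝ) (s:ℝ) τ₁ + qT (r:ℝ) (s:ℝ) τ₁))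
          / (Ngen a c (pT r s τ₁) (qT r s τ₁) + 1)
        < (Ngen a c (pT r s τ₂) (qT r s τ₁) + (pT (r:ℝ) (s:ℝ) τ₂ + qT (r:ℝ) (s:ℝ) τ₁))
          / (Ngen a c (pT r s τ₂) (qT r s τ₁) + 1) :=
          F1_pstep ha hc hq01 hp01 hp11 (hpmono τ₁ τ₂ h₁ h₁₂)
      _ < (Ngen a c (pT r s τ₂) (qT r s τ₂) + (pT (r:ℝ) (s:ℝ) τ₂ + qT (r:ℝ) (s:ℝ) τ₂))
          / (Ngen a c (pT r s τ₂) (qT r s τ₂) + 1) :=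
          F1_qstep ha hc hp02 hp12 hq01 (hqmono τ₁ τ₂ h₁ h₁₂)
  · intro τ₁ h₁ τ₂ h₂ h₁₂
    simp only [Set.mem_Ioi] at h₁ h₂
    simp only
    obtain ⟨hp01, hp11, hq01⟩ := hbasic τ₁ h₁
    obtain ⟨hp02, hp12, hq02⟩ := hbasic τ₂ h₂
    rw [hval2 τ₁ h₁, hval2 τ₂ h₂]
    set N₁ := Ngen a c (pT r s τ₁) (qT r s τ₁) with hN1def
    set N₂ := Ngen a c (pT r s τ₂) (qT r s τ₂) with hN2def
    have hN1 : 0 < N₁ := Ngen_pos ha hc hp01 hq01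
    have hN2 : 0 < N₂ := Ngen_pos ha hc hp02 hq02
    have hgt1 : pT (r:ℝ) (s:ℝ) τ₁ + qT (r:ℝ) (s:ℝ) τ₁ < N₁ := Ngen_gt ha hc hp01 hq01
    have hgt2 : pT (r:ℝ) (s:ℝ) τ₂ + qT (r:ℝ) (s:ℝ) τ₂ < N₂ := Ngen_gt ha hc hp02 hq02
    have hrat := ratio_step ha hc hp01 hq01 hp02 hq02 (hxmono τ₁ τ₂ h₁ h₁₂)
    rw [← hN1def, ← hN2def] at hrat
    have hRlt : (N₁ - (pT (r:ℝ) (s:ℝ) τ₁ + qT (r:ℝ) (s:ℝ) τ₁)) / N₁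
        < (N₂ - (pT (r:ℝ) (s:ℝ) τ₂ + qT (r:ℝ) (s:ℝ) τ₂)) / N₂ := by
      rw [div_lt_div_iff₀ hN1 hN2]
      nlinarith [hrat]
    have hRnn : 0 ≤ (N₁ - (pT (r:ℝ) (s:ℝ) τ₁ + qT (r:ℝ) (s:ℝ) τ₁)) / N₁ :=
      div_nonneg (by linarith) hN1.le
    exact mul_lt_mul_of_pos_left (by exact pow_lt_pow_left₀ hRlt hRnn two_ne_zero) hk4
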